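/- arXiv:2403.05285 — 3 statements merged into one kernel-verified Lean document; each statement's English description precedes it below -/
import Mathlib

section
/- Consider the V-system on a qutrit with rates 0 < γ1 < γ2, i.e. n = 3 with Lindblad terms V_1 = √γ1·E_{12} and V_2 = √γ2·E_{13}. Let λ = (a,b,c) ∈ Δ² with a > b > c > 0, and let P(λ) := conv{ −L_P λ : P a 3×3 permutation matrix }. Then an element v ∈ P(λ) is optimal — meaning every w ∈ P(λ) with w ⊵ v equals v — if and only if v is a convex combination of the two vectors (γ2·b + γ1·c, −γ2·b, −γ1·c) and (γ1·b + γ2·c, −γ1·b, −γ2·c). -/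
open Matrix MeasureTheory
open scoped ComplexOrder

/-- The dissipator `Γ_V(ρ) = ½(V*Vρ + ρV*V) − VρV*`. -/
noncomputable def dissipator {n : ℕ} (V ρ : Matrix (Fin n) (Fin n) ℂ) : Matrix (Fin n) (Fin n) ℂ :=
  (1 / 2 : ℂ) • (Vᴴ * V * ρ + ρ * (Vᴴ * V)) - V * ρ * Vᴴ

/-- `i·ad_H` as a linear map `ρ ↦ i[H,ρ]`. -/
noncomputable def iAd {n : ℕ} (H : Matrix (Fin n) (Fin n) ℂ) :
    Matrix (Fin n) (Fin n) ℂ →ₗ[ℂ] Matrix (Fin n) (Fin n) ℂ :=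
  Complex.I • (LinearMap.mulLeft ℂ H - LinearMap.mulRight ℂ H)

/-- The dissipator `Γ_V` as a linear map on matrices. -/
noncomputable def dissLin {n : ℕ} (V : Matrix (Fin n) (Fin n) ℂ) :
    Matrix (Fin n) (Fin n) ℂ →ₗ[ℂ] Matrix (Fin n) (Fin n) ℂ :=
  (1 / 2 : ℂ) • (LinearMap.mulLeft ℂ (Vᴴ * V) + LinearMap.mulRight ℂ (Vᴴ * V)) -
    (LinearMap.mulRight ℂ Vᴴ).comp (LinearMap.mulLeft ℂ V)

/-- Exponential of a linear endomorphism of the matrix space,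
computed via its matrix representation in the standard basis. -/
noncomputable def expEnd {n : ℕ}
    (A : Matrix (Fin n) (Fin n) ℂ →ₗ[ℂ] Matrix (Fin n) (Fin n) ℂ) :
    Matrix (Fin n) (Fin n) ℂ →ₗ[ℂ] Matrix (Fin n) (Fin n) ℂ :=
  Matrix.toLin (Matrix.stdBasis ℂ (Fin n) (Fin n)) (Matrix.stdBasis ℂ (Fin n) (Fin n))
    (NormedSpace.exp (LinearMap.toMatrix (Matrix.stdBasis ℂ (Fin n) (Fin n))
      (Matrix.stdBasis ℂ (Fin n) (Fin n)) A))

/-- `J(U)_{ij} = Σ_k |(U*V_kU)_{ij}|²`. -/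
noncomputable def Jmat {n r : ℕ} (V : Fin r → Matrix (Fin n) (Fin n) ℂ)
    (U : Matrix (Fin n) (Fin n) ℂ) : Matrix (Fin n) (Fin n) ℝ :=
  fun i j => ∑ k, ‖(Uᴴ * V k * U) i j‖ ^ 2

/-- The induced vector field `−L_U` applied to `λ`. -/
noncomputable def negL {n r : ℕ} (V : Fin r → Matrix (Fin n) (Fin n) ℂ)
    (U : Matrix (Fin n) (Fin n) ℂ) (lam : Fin n → ℝ) : Fin n → ℝ :=
  fun i => (∑ j, Jmat V U i j * lam j) - (∑ j, Jmat V U j i) * lam i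

/-- The set of achievable derivatives `derv(λ) = {−L_U λ : U ∈ SU(n)}`. -/
noncomputable def derv {n r : ℕ} (V : Fin r → Matrix (Fin n) (Fin n) ℂ)
    (lam : Fin n → ℝ) : Set (Fin n → ℝ) :=
  {w | ∃ U ∈ Matrix.specialUnitaryGroup (Fin n) ℂ, w = negL V U lam}

/-- `InfMaj v w` means `v ⊵ w`: all initial partial sums of `v` dominate those of `w`. -/
def InfMaj {n : ℕ} (v w : Fin n → ℝ) : Prop :=
  ∀ k : Fin n, ∑ i ∈ Finset.Iic k, w i ≤ ∑ i ∈ Finset.Iic k, v i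

/-- The V-system on a qutrit: Lindblad terms `V₁ = √γ₁·E₁₂` and `V₂ = √γ₂·E₁₃`. -/
noncomputable def VsysTerms (γ1 γ2 : ℝ) : Fin 2 → Matrix (Fin 3) (Fin 3) ℂ :=
  ![(Real.sqrt γ1 : ℂ) • Matrix.single 0 1 1,
    (Real.sqrt γ2 : ℂ) • Matrix.single 0 2 1]


section VsysAux

lemma perm_conj_entry {n : ℕ} (σ : Equiv.Perm (Fin n)) (A : Matrix (Fin n) (Fin n) ℂ) (i j : Fin n) :
    ((σ.permMatrix ℂ)ᴴ * A * σ.permMatrix ℂ) i j = A (σ⁻¹ i) (σ⁻¹ j) := by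
  have h1 : (σ.permMatrix ℂ)ᴴ = (σ⁻¹).permMatrix ℂ := by
    ext k l
    simp only [Equiv.Perm.permMatrix, conjTranspose_apply, PEquiv.toMatrix_apply,
      Equiv.toPEquiv_apply, Option.mem_def, Option.some.injEq, apply_ite (star : ℂ → ℂ),
      star_one, star_zero]
    by_cases h : σ l = k <;> simp [h, Equiv.Perm.eq_inv_iff_eq, Equiv.eq_symm_apply, eq_comm]
  rw [h1, PEquiv.mul_toMatrix_toPEquiv, PEquiv.toMatrix_toPEquiv_mul]
  simp [Matrix.submatrix_apply]

lemma Jmat_Vsys (γ1 γ2 : ℝ) (h1 : 0 ≤ γ1) (h2 : 0 ≤ γ2) (σ : Equiv.Perm (Fin 3)) (i j : Fin 3) :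
    Jmat (VsysTerms γ1 γ2) (σ.permMatrix ℂ) i j =
      (if i = σ 0 ∧ j = σ 1 then γ1 else 0) + (if i = σ 0 ∧ j = σ 2 then γ2 else 0) := by
  unfold Jmat VsysTerms
  rw [Fin.sum_univ_two]
  simp only [Matrix.cons_val_zero, Matrix.cons_val_one, Matrix.head_cons]
  rw [perm_conj_entry, perm_conj_entry]
  have key : ∀ (γ : ℝ), 0 ≤ γ → ∀ (q : Fin 3),
      ‖(((Real.sqrt γ : ℂ) • Matrix.single 0 q 1) (σ⁻¹ i) (σ⁻¹ j) : ℂ)‖ ^ 2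
        = if i = σ 0 ∧ j = σ q then γ else 0 := by
    intro γ hγ q
    have hcond : (σ⁻¹ i = 0 ∧ σ⁻¹ j = q) ↔ (i = σ 0 ∧ j = σ q) := by
      constructor <;> rintro ⟨r1, r2⟩ <;>
        simp_all [Equiv.Perm.eq_inv_iff_eq, Equiv.Perm.inv_eq_iff_eq, Equiv.symm_apply_eq]
    by_cases h : i = σ 0 ∧ j = σ q
    · rw [if_pos h]
      have h' : σ⁻¹ i = 0 ∧ σ⁻¹ j = q := hcond.mpr h
      simp [Matrix.single, h'.1, h'.2, Real.sq_sqrt hγ, Complex.norm_real,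
        abs_of_nonneg (Real.sqrt_nonneg γ)]
    · rw [if_neg h]
      have h' : ¬ (σ⁻¹ i = 0 ∧ σ⁻¹ j = q) := fun hh => h (hcond.mp hh)
      simp only [Matrix.smul_apply, Matrix.single, Matrix.of_apply]
      rw [if_neg (fun hh => h' ⟨hh.1.symm, hh.2.symm⟩)]
      simp
  rw [key γ1 h1 1, key γ2 h2 2]

lemma negL_Vsys (γ1 γ2 : ℝ) (h1 : 0 ≤ γ1) (h2 : 0 ≤ γ2) (σ : Equiv.Perm (Fin 3))
    (lam : Fin 3 → ℝ) (i : Fin 3) :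
    negL (VsysTerms γ1 γ2) (σ.permMatrix ℂ) lam i =
      (if i = σ 0 then γ1 * lam (σ 1) + γ2 * lam (σ 2) else 0)
        - ((if i = σ 1 then γ1 else 0) + (if i = σ 2 then γ2 else 0)) * lam i := by
  have sum1 : ∀ (A : Prop) (_ : Decidable A) (x : ℝ) (p : Fin 3),
      (∑ j : Fin 3, (if A ∧ j = p then x else 0) * lam j) = if A then x * lam p else 0 := by
    intro A _ x p
    by_cases hA : A
    · simp only [hA, true_and, if_true, ite_mul, zero_mul]
      rw [Finset.sum_ite_eq' Finset.univ p (fun j => x * lam j)]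
      simp
    · simp [hA]
  have sum2 : ∀ (B : Prop) (_ : Decidable B) (x : ℝ) (p : Fin 3),
      (∑ j : Fin 3, (if j = p ∧ B then x else 0)) = if B then x else 0 := by
    intro B _ x p
    by_cases hB : B
    · simp only [hB, and_true, if_true]
      rw [Finset.sum_ite_eq' Finset.univ p (fun _ => x)]
      simp
    · simp [hB]
  unfold negL
  simp only [Jmat_Vsys γ1 γ2 h1 h2, add_mul, Finset.sum_add_distrib,
    sum1 (i = σ 0) _ γ1 (σ 1), sum1 (i = σ 0) _ γ2 (σ 2),
    sum2 (i = σ 1) _ γ1 (σ 0), sum2 (i = σ 2) _ γ2 (σ 0)]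
  by_cases h : i = σ 0 <;> simp [h]

lemma perm3_cases (σ : Equiv.Perm (Fin 3)) :
    (σ 0 = 0 ∧ σ 1 = 1 ∧ σ 2 = 2) ∨ (σ 0 = 0 ∧ σ 1 = 2 ∧ σ 2 = 1) ∨
    (σ 0 = 1 ∧ σ 1 = 0 ∧ σ 2 = 2) ∨ (σ 0 = 1 ∧ σ 1 = 2 ∧ σ 2 = 0) ∨
    (σ 0 = 2 ∧ σ 1 = 0 ∧ σ 2 = 1) ∨ (σ 0 = 2 ∧ σ 1 = 1 ∧ σ 2 = 0) := by
  revert σ; decide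

lemma Iic_sums (u : Fin 3 → ℝ) :
    (∑ i ∈ Finset.Iic (0 : Fin 3), u i = u 0) ∧
    (∑ i ∈ Finset.Iic (1 : Fin 3), u i = u 0 + u 1) ∧
    (∑ i ∈ Finset.Iic (2 : Fin 3), u i = u 0 + u 1 + u 2) := by
  refine ⟨?_, ?_, ?_⟩
  · rw [show (Finset.Iic (0 : Fin 3)) = {0} by decide, Finset.sum_singleton]
  · rw [show (Finset.Iic (1 : Fin 3)) = {0, 1} by decide,
      Finset.sum_insert (by decide), Finset.sum_singleton]
  · rw [show (Finset.Iic (2 : Fin 3)) = {0, 1, 2} by decide,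
      Finset.sum_insert (by decide), Finset.sum_insert (by decide), Finset.sum_singleton, add_assoc]

lemma infMaj_of (w v : Fin 3 → ℝ) (h0 : v 0 ≤ w 0) (h1 : v 0 + v 1 ≤ w 0 + w 1)
    (h2 : v 0 + v 1 + v 2 ≤ w 0 + w 1 + w 2) : InfMaj w v := by
  intro k
  fin_cases k
  · show ∑ i ∈ Finset.Iic (0 : Fin 3), v i ≤ ∑ i ∈ Finset.Iic (0 : Fin 3), w i
    rw [(Iic_sums w).1, (Iic_sums v).1]; exact h0
  · show ∑ i ∈ Finset.Iic (1 : Fin 3), v i ≤ ∑ i ∈ Finset.Iic (1 : Fin 3), w i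
    rw [(Iic_sums w).2.1, (Iic_sums v).2.1]; exact h1
  · show ∑ i ∈ Finset.Iic (2 : Fin 3), v i ≤ ∑ i ∈ Finset.Iic (2 : Fin 3), w i
    rw [(Iic_sums w).2.2, (Iic_sums v).2.2]; exact h2

lemma infMaj_elim (w v : Fin 3 → ℝ) (h : InfMaj w v) :
    v 0 ≤ w 0 ∧ v 0 + v 1 ≤ w 0 + w 1 := by
  have h0 := h 0
  have h1 := h 1
  rw [(Iic_sums w).1, (Iic_sums v).1] at h0
  rw [(Iic_sums w).2.1, (Iic_sums v).2.1] at h1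
  exact ⟨h0, h1⟩

end VsysAux

set_option maxHeartbeats 4000000 in
/-- For the V-system with `0 < γ₁ < γ₂` and a strictly ordered state
`λ = (a,b,c)`, an element of the permutation polytope `P(λ)` is optimal iff it is a convex
combination of `(γ₂b + γ₁c, −γ₂b, −γ₁c)` and `(γ₁b + γ₂c, −γ₁b, −γ₂c)`. -/
theorem V_system_optimal_derivatives (γ1 γ2 : ℝ) (hγ1 : 0 < γ1) (hγ12 : γ1 < γ2)
    (a b c : ℝ) (hc : 0 < c) (hcb : c < b) (hba : b < a) (hsum : a + b + c = 1)
    (P : Set (Fin 3 → ℝ))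
    (hP : P = convexHull ℝ {w : Fin 3 → ℝ | ∃ π : Equiv.Perm (Fin 3),
      w = negL (VsysTerms γ1 γ2) (π.permMatrix ℂ) ![a, b, c]}) :
    ∀ v ∈ P, ((∀ w ∈ P, InfMaj w v → w = v) ↔
      v ∈ segment ℝ ![γ2 * b + γ1 * c, -(γ2 * b), -(γ1 * c)]
        ![γ1 * b + γ2 * c, -(γ1 * b), -(γ2 * c)]) := by
  subst hP
  have hγ2 : (0 : ℝ) < γ2 := lt_trans hγ1 hγ12
  have hb : (0 : ℝ) < b - c := by linarith
  set A : Fin 3 → ℝ := ![γ2 * b + γ1 * c, -(γ2 * b), -(γ1 * c)] with hA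
  set B : Fin 3 → ℝ := ![γ1 * b + γ2 * c, -(γ1 * b), -(γ2 * c)] with hB
  set S : Set (Fin 3 → ℝ) := {w : Fin 3 → ℝ | ∃ π : Equiv.Perm (Fin 3),
      w = negL (VsysTerms γ1 γ2) (π.permMatrix ℂ) ![a, b, c]} with hS
  -- explicit evaluations of A and B
  have hA0 : A 0 = γ2 * b + γ1 * c := rfl
  have hA1 : A 1 = -(γ2 * b) := rfl
  have hA2 : A 2 = -(γ1 * c) := rfl
  have hB0 : B 0 = γ1 * b + γ2 * c := rfl
  have hB1 : B 1 = -(γ1 * b) := rfl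
  have hB2 : B 2 = -(γ2 * c) := rfl
  have ha0 : (0:ℝ) < a := by linarith
  have hb0 : (0:ℝ) < b := by linarith
  have m1 : (0:ℝ) < γ1 * a := mul_pos hγ1 ha0
  have m2 : (0:ℝ) < γ2 * a := mul_pos hγ2 ha0
  have m3 : (0:ℝ) < γ1 * b := mul_pos hγ1 hb0
  have m4 : (0:ℝ) < γ2 * b := mul_pos hγ2 hb0
  have m5 : (0:ℝ) < γ1 * c := mul_pos hγ1 hc
  have m6 : (0:ℝ) < γ2 * c := mul_pos hγ2 hc
  have m7 : (0:ℝ) < γ1 * (a * b) := mul_pos hγ1 (mul_pos ha0 hb0)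
  have m8 : (0:ℝ) < γ2 * (a * b) := mul_pos hγ2 (mul_pos ha0 hb0)
  have m9 : (0:ℝ) < γ1 * (a * c) := mul_pos hγ1 (mul_pos ha0 hc)
  have m10 : (0:ℝ) < γ2 * (a * c) := mul_pos hγ2 (mul_pos ha0 hc)
  have m11 : (0:ℝ) < γ1 * (b * c) := mul_pos hγ1 (mul_pos hb0 hc)
  have m12 : (0:ℝ) < γ2 * (b * c) := mul_pos hγ2 (mul_pos hb0 hc)
  have m13 : (0:ℝ) < γ1 * (c * c) := mul_pos hγ1 (mul_pos hc hc)
  have m14 : (0:ℝ) < γ2 * (c * c) := mul_pos hγ2 (mul_pos hc hc)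
  have m15 : (0:ℝ) < γ1 * (b * b) := mul_pos hγ1 (mul_pos hb0 hb0)
  have m16 : (0:ℝ) < γ2 * (b * b) := mul_pos hγ2 (mul_pos hb0 hb0)
  have m17 : (0:ℝ) < (γ2 - γ1) * c := mul_pos (by linarith) hc
  have m18 : (0:ℝ) < (γ2 - γ1) * (b - c) := mul_pos (by linarith) hb
  -- the vertex set is contained in C
  have hSC : S ⊆ {u : Fin 3 → ℝ |
      u 0 + u 1 + u 2 = 0 ∧ u 0 + u 1 ≤ γ2 * c ∧ u 0 ≤ γ2 * b + γ1 * c ∧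
      c * u 0 + (b - c) * (u 0 + u 1) ≤ (γ1 + γ2) * (b * c) ∧
      (c * u 0 + (b - c) * (u 0 + u 1) = (γ1 + γ2) * (b * c) → u ∈ segment ℝ A B)} := by
    rintro w ⟨π, rfl⟩
    rcases perm3_cases π with h | h | h | h | h | h
    · -- identity : vertex B
      have hw : negL (VsysTerms γ1 γ2) (π.permMatrix ℂ) ![a, b, c]
          = ![γ1 * b + γ2 * c, -(γ1 * b), -(γ2 * c)] := by
        funext i
        rw [negL_Vsys γ1 γ2 hγ1.le hγ2.le π, h.1, h.2.1, h.2.2]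
        fin_cases i <;> norm_num [Fin.ext_iff, Matrix.cons_val_two] <;> ring
      rw [hw, ← hB]
      refine ⟨?_, ?_, ?_, ?_, fun _ => right_mem_segment ℝ A B⟩
      · rw [hB0, hB1, hB2] <;> ring
      · rw [hB0, hB1] <;> linarith
      · rw [hB0] <;> linarith
      · rw [hB0, hB1] <;> nlinarith
    · -- swap 1 2 : vertex A
      have hw : negL (VsysTerms γ1 γ2) (π.permMatrix ℂ) ![a, b, c]
          = ![γ2 * b + γ1 * c, -(γ2 * b), -(γ1 * c)] := by
        funext i
        rw [negL_Vsys γ1 γ2 hγ1.le hγ2.le π, h.1, h.2.1, h.2.2]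
        fin_cases i <;> norm_num [Fin.ext_iff, Matrix.cons_val_two] <;> ring
      rw [hw, ← hA]
      refine ⟨?_, ?_, ?_, ?_, fun _ => left_mem_segment ℝ A B⟩
      · rw [hA0, hA1, hA2] <;> ring
      · rw [hA0, hA1] <;> linarith
      · rw [hA0] <;> linarith
      · rw [hA0, hA1] <;> nlinarith
    · have hw : negL (VsysTerms γ1 γ2) (π.permMatrix ℂ) ![a, b, c]
          = ![-(γ1 * a), γ1 * a + γ2 * c, -(γ2 * c)] := by
        funext i
        rw [negL_Vsys γ1 γ2 hγ1.le hγ2.le π, h.1, h.2.1, h.2.2]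
        fin_cases i <;> norm_num [Fin.ext_iff, Matrix.cons_val_two] <;> ring
      rw [hw]
      simp only [Set.mem_setOf_eq, Matrix.cons_val_zero, Matrix.cons_val_one,
        Matrix.cons_val_two, Matrix.head_cons, Matrix.tail_cons]
      refine ⟨by ring, by linarith, by linarith, by nlinarith, fun hEq => absurd hEq (by nlinarith)⟩
    · have hw : negL (VsysTerms γ1 γ2) (π.permMatrix ℂ) ![a, b, c]
          = ![-(γ2 * a), γ2 * a + γ1 * c, -(γ1 * c)] := by
        funext i
        rw [negL_Vsys γ1 γ2 hγ1.le hγ2.le π, h.1, h.2.1, h.2.2]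
        fin_cases i <;> norm_num [Fin.ext_iff, Matrix.cons_val_two] <;> ring
      rw [hw]
      simp only [Set.mem_setOf_eq, Matrix.cons_val_zero, Matrix.cons_val_one,
        Matrix.cons_val_two, Matrix.head_cons, Matrix.tail_cons]
      refine ⟨by ring, by linarith, by linarith, by nlinarith, fun hEq => absurd hEq (by nlinarith)⟩
    · have hw : negL (VsysTerms γ1 γ2) (π.permMatrix ℂ) ![a, b, c]
          = ![-(γ1 * a), -(γ2 * b), γ1 * a + γ2 * b] := by
        funext i
        rw [negL_Vsys γ1 γ2 hγ1.le hγ2.le π, h.1, h.2.1, h.2.2]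
        fin_cases i <;> norm_num [Fin.ext_iff, Matrix.cons_val_two] <;> ring
      rw [hw]
      simp only [Set.mem_setOf_eq, Matrix.cons_val_zero, Matrix.cons_val_one,
        Matrix.cons_val_two, Matrix.head_cons, Matrix.tail_cons]
      refine ⟨by ring, by linarith, by linarith, by nlinarith, fun hEq => absurd hEq (by nlinarith)⟩
    · have hw : negL (VsysTerms γ1 γ2) (π.permMatrix ℂ) ![a, b, c]
          = ![-(γ2 * a), -(γ1 * b), γ2 * a + γ1 * b] := by
        funext i
        rw [negL_Vsys γ1 γ2 hγ1.le hγ2.le π, h.1, h.2.1, h.2.2]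
        fin_cases i <;> norm_num [Fin.ext_iff, Matrix.cons_val_two] <;> ring
      rw [hw]
      simp only [Set.mem_setOf_eq, Matrix.cons_val_zero, Matrix.cons_val_one,
        Matrix.cons_val_two, Matrix.head_cons, Matrix.tail_cons]
      refine ⟨by ring, by linarith, by linarith, by nlinarith, fun hEq => absurd hEq (by nlinarith)⟩
  -- C is convex
  have hCconv : Convex ℝ {u : Fin 3 → ℝ |
      u 0 + u 1 + u 2 = 0 ∧ u 0 + u 1 ≤ γ2 * c ∧ u 0 ≤ γ2 * b + γ1 * c ∧
      c * u 0 + (b - c) * (u 0 + u 1) ≤ (γ1 + γ2) * (b * c) ∧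
      (c * u 0 + (b - c) * (u 0 + u 1) = (γ1 + γ2) * (b * c) → u ∈ segment ℝ A B)} := by
    intro x hx y hy s t hs ht hst
    obtain ⟨hx1, hx2, hx3, hx4, hx5⟩ := hx
    obtain ⟨hy1, hy2, hy3, hy4, hy5⟩ := hy
    have e : ∀ k : Fin 3, (s • x + t • y) k = s * x k + t * y k := fun k => rfl
    refine ⟨?_, ?_, ?_, ?_, ?_⟩
    · rw [e 0, e 1, e 2]; linear_combination s * hx1 + t * hy1
    · rw [e 0, e 1]
      nlinarith [mul_le_mul_of_nonneg_left hx2 hs, mul_le_mul_of_nonneg_left hy2 ht]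
    · rw [e 0]
      nlinarith [mul_le_mul_of_nonneg_left hx3 hs, mul_le_mul_of_nonneg_left hy3 ht]
    · rw [e 0, e 1]
      nlinarith [mul_le_mul_of_nonneg_left hx4 hs, mul_le_mul_of_nonneg_left hy4 ht]
    · intro heq
      rw [e 0, e 1] at heq
      by_cases hs0 : s = 0
      · have ht1 : t = 1 := by linarith
        have hyy : s • x + t • y = y := by rw [hs0, ht1]; simp
        rw [hyy]
        apply hy5
        rw [hs0, ht1] at heq
        linarith [heq]
      · by_cases ht0 : t = 0
        · have hs1 : s = 1 := by linarith
          have hxx : s • x + t • y = x := by rw [ht0, hs1]; simp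
          rw [hxx]
          apply hx5
          rw [ht0, hs1] at heq
          linarith [heq]
        · have hs' : (0 : ℝ) < s := lt_of_le_of_ne hs (Ne.symm hs0)
          have ht' : (0 : ℝ) < t := lt_of_le_of_ne ht (Ne.symm ht0)
          have hFx : c * x 0 + (b - c) * (x 0 + x 1) = (γ1 + γ2) * (b * c) := by
            by_contra hne
            have hlt : c * x 0 + (b - c) * (x 0 + x 1) < (γ1 + γ2) * (b * c) :=
              lt_of_le_of_ne hx4 hne
            nlinarith [mul_lt_mul_of_pos_left hlt hs', mul_le_mul_of_nonneg_left hy4 ht]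
          have hFy : c * y 0 + (b - c) * (y 0 + y 1) = (γ1 + γ2) * (b * c) := by
            by_contra hne
            have hlt : c * y 0 + (b - c) * (y 0 + y 1) < (γ1 + γ2) * (b * c) :=
              lt_of_le_of_ne hy4 hne
            nlinarith [mul_lt_mul_of_pos_left hlt ht', mul_le_mul_of_nonneg_left hx4 hs]
          exact (convex_segment A B) (hx5 hFx) (hy5 hFy) hs ht hst
  have hmem : ∀ u ∈ convexHull ℝ S, u ∈ {u : Fin 3 → ℝ |
      u 0 + u 1 + u 2 = 0 ∧ u 0 + u 1 ≤ γ2 * c ∧ u 0 ≤ γ2 * b + γ1 * c ∧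
      c * u 0 + (b - c) * (u 0 + u 1) ≤ (γ1 + γ2) * (b * c) ∧
      (c * u 0 + (b - c) * (u 0 + u 1) = (γ1 + γ2) * (b * c) → u ∈ segment ℝ A B)} :=
    fun u hu => convexHull_min hSC hCconv hu
  -- A and B are in the polytope
  have hid : ((1 : Equiv.Perm (Fin 3)) 0 = 0 ∧ (1 : Equiv.Perm (Fin 3)) 1 = 1 ∧
      (1 : Equiv.Perm (Fin 3)) 2 = 2) := by decide
  have hsw : ((Equiv.swap (1 : Fin 3) 2) 0 = 0 ∧ (Equiv.swap (1 : Fin 3) 2) 1 = 2 ∧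
      (Equiv.swap (1 : Fin 3) 2) 2 = 1) := by decide
  have hBeq : negL (VsysTerms γ1 γ2) ((1 : Equiv.Perm (Fin 3)).permMatrix ℂ) ![a, b, c] = B := by
    funext i
    rw [negL_Vsys γ1 γ2 hγ1.le hγ2.le _, hid.1, hid.2.1, hid.2.2, hB]
    fin_cases i <;> norm_num [Fin.ext_iff, Matrix.cons_val_two] <;> ring
  have hAeq : negL (VsysTerms γ1 γ2) ((Equiv.swap (1 : Fin 3) 2).permMatrix ℂ) ![a, b, c] = A := by
    funext i
    rw [negL_Vsys γ1 γ2 hγ1.le hγ2.le _, hsw.1, hsw.2.1, hsw.2.2, hA]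
    fin_cases i <;> norm_num [Fin.ext_iff, Matrix.cons_val_two] <;> ring
  have hAP : A ∈ convexHull ℝ S := subset_convexHull ℝ S ⟨Equiv.swap 1 2, hAeq.symm⟩
  have hBP : B ∈ convexHull ℝ S := subset_convexHull ℝ S ⟨1, hBeq.symm⟩
  have hseg : segment ℝ A B ⊆ convexHull ℝ S :=
    (convex_convexHull ℝ S).segment_subset hAP hBP
  -- main statement
  intro v hv
  have hvC := hmem v hv
  constructor
  · -- optimal → on segment
    intro hopt
    by_contra hvs
    have hFv : c * v 0 + (b - c) * (v 0 + v 1) < (γ1 + γ2) * (b * c) :=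
      lt_of_le_of_ne hvC.2.2.2.1 (fun h => hvs (hvC.2.2.2.2 h))
    by_cases hcase : v 0 ≤ γ1 * b + γ2 * c
    · have hmaj : InfMaj B v := by
        apply infMaj_of
        · rw [hB0]; exact hcase
        · rw [hB0, hB1]; have := hvC.2.1; nlinarith
        · rw [hB0, hB1, hB2]; have := hvC.1; linarith
      have hBv := hopt B hBP hmaj
      rw [← hBv] at hFv
      rw [hB0, hB1] at hFv
      nlinarith
    · push_neg at hcase
      have hden : (0 : ℝ) < (γ2 - γ1) * (b - c) := by nlinarith
      set t : ℝ := (v 0 - (γ1 * b + γ2 * c)) / ((γ2 - γ1) * (b - c)) with hT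
      have ht0 : 0 < t := div_pos (by linarith) hden
      have ht1 : t ≤ 1 := by
        rw [hT, div_le_one hden]
        have := hvC.2.2.1
        nlinarith
      set w : Fin 3 → ℝ := t • A + (1 - t) • B with hwdef
      have hwseg : w ∈ segment ℝ A B := ⟨t, 1 - t, ht0.le, by linarith, by ring, rfl⟩
      have hwP : w ∈ convexHull ℝ S := hseg hwseg
      have ew : ∀ k : Fin 3, w k = t * A k + (1 - t) * B k := fun k => rfl
      have hw0 : w 0 = v 0 := by
        rw [ew 0, hA0, hB0, hT]
        field_simp [(sub_pos.mpr hγ12).ne', hb.ne']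
        ring
      have hFw : c * w 0 + (b - c) * (w 0 + w 1) = (γ1 + γ2) * (b * c) := by
        rw [ew 0, ew 1, hA0, hA1, hB0, hB1]
        ring
      have hw01 : v 0 + v 1 < w 0 + w 1 := by
        rw [hw0] at hFw
        nlinarith
      have hmaj : InfMaj w v := by
        apply infMaj_of
        · rw [hw0]
        · linarith
        · have := (hmem w hwP).1
          have := hvC.1
          linarith
      have hwv := hopt w hwP hmaj
      rw [hwv] at hw01
      linarith
  · -- on segment → optimal
    intro hvs w hw hmaj
    have hwC := hmem w hw
    obtain ⟨s, t, hs, ht, hst, hvst⟩ := hvs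
    have hv0 : v 0 = s * (γ2 * b + γ1 * c) + t * (γ1 * b + γ2 * c) := by
      rw [← hvst]; rfl
    have hv1 : v 1 = s * (-(γ2 * b)) + t * (-(γ1 * b)) := by
      rw [← hvst]; rfl
    have hFv : c * v 0 + (b - c) * (v 0 + v 1) = (γ1 + γ2) * (b * c) := by
      rw [hv0, hv1]
      linear_combination ((γ1 + γ2) * (b * c)) * hst
    obtain ⟨h0, h1⟩ := infMaj_elim w v hmaj
    have key1 : c * (w 0 - v 0) + (b - c) * ((w 0 + w 1) - (v 0 + v 1)) ≤ 0 := by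
      have := hwC.2.2.2.1
      nlinarith
    have k2 : 0 ≤ (b - c) * ((w 0 + w 1) - (v 0 + v 1)) := mul_nonneg hb.le (by linarith)
    have k3 : 0 ≤ c * (w 0 - v 0) := mul_nonneg hc.le (by linarith)
    have e0 : w 0 = v 0 := by
      have hz : c * (w 0 - v 0) = 0 := le_antisymm (by linarith) k3
      rcases mul_eq_zero.mp hz with h | h
      · exact absurd h (ne_of_gt hc)
      · linarith
    have e1 : w 0 + w 1 = v 0 + v 1 := by
      have hz : (b - c) * ((w 0 + w 1) - (v 0 + v 1)) = 0 := le_antisymm (by linarith) k2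
      rcases mul_eq_zero.mp hz with h | h
      · exact absurd h (ne_of_gt hb)
      · linarith
    funext i
    have ew2 := hwC.1
    have ev2 := hvC.1
    fin_cases i
    · show w 0 = v 0; linarith
    · show w 1 = v 1; linarith
    · show w 2 = v 2; linarith
end

section
/- Consider the spin-spin system, i.e. n = 4 with the single Lindblad term V = E_{13} + E_{24} ∈ M_4(ℂ). Let λ = (a,b,c,d) ∈ Δ³ with a > b > c > d ≥ 0, and let P(λ) := conv{ −L_P λ : P a 4×4 permutation matrix }. Then an element v ∈ P(λ) is optimal — meaning every w ∈ P(λ) with w ⊵ v equals v — if and only if v is a convex combination of the two vectors (b, −b, d, −d) and (c, d, −c, −d). -/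
open Matrix MeasureTheory
open scoped ComplexOrder

/-- The spin-spin system Lindblad term `V = σ₋ ⊗ 𝟙 = E₁₃ + E₂₄ ∈ M₄(ℂ)`. -/
noncomputable def spinSpinV : Matrix (Fin 4) (Fin 4) ℂ :=
  Matrix.single 0 2 1 + Matrix.single 1 3 1

/-! ### Auxiliary lemmas -/

lemma permMatrix_conjTranspose' (π : Equiv.Perm (Fin 4)) :
    (π.permMatrix ℂ)ᴴ = (π⁻¹).permMatrix ℂ := by
  ext i j
  simp only [Equiv.Perm.permMatrix, Matrix.conjTranspose_apply, PEquiv.toMatrix_apply,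
    Equiv.toPEquiv_apply, Option.mem_def, Option.some.injEq, apply_ite (star : ℂ → ℂ),
    star_one, star_zero, Equiv.Perm.inv_def, Equiv.symm_apply_eq]
  simp [eq_comm]

lemma conj_entry' (π : Equiv.Perm (Fin 4)) (i j : Fin 4) :
    ((π.permMatrix ℂ)ᴴ * spinSpinV * π.permMatrix ℂ) i j = spinSpinV (π⁻¹ i) (π⁻¹ j) := by
  rw [permMatrix_conjTranspose', Equiv.Perm.permMatrix, Equiv.Perm.permMatrix,
    PEquiv.toMatrix_toPEquiv_mul, PEquiv.mul_toMatrix_toPEquiv]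
  rfl

lemma spinSpinV_apply' (k l : Fin 4) :
    spinSpinV k l = (if k = 0 ∧ l = 2 then 1 else 0) + (if k = 1 ∧ l = 3 then 1 else 0) := by
  simp [spinSpinV, Matrix.single, Matrix.add_apply, eq_comm]

lemma Jmat_perm' (π : Equiv.Perm (Fin 4)) (i j : Fin 4) :
    Jmat (fun _ : Fin 1 => spinSpinV) (π.permMatrix ℂ) i j =
      (if i = π 0 ∧ j = π 2 then 1 else 0) + (if i = π 1 ∧ j = π 3 then 1 else 0) := by
  simp only [Jmat, Fin.sum_univ_one, conj_entry', spinSpinV_apply', Equiv.Perm.inv_def,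
    Equiv.symm_apply_eq]
  by_cases h1 : i = π 0 ∧ j = π 2 <;> by_cases h2 : i = π 1 ∧ j = π 3 <;>
    simp [h1, h2]

/-- The vertex vector attached to the data `(p, r, q, s)`. -/
noncomputable def vertexVec (p r q s : Fin 4) (lam : Fin 4 → ℝ) : Fin 4 → ℝ := fun i =>
  (if i = p then lam q else 0) + (if i = r then lam s else 0)
    - ((if i = q then 1 else 0) + (if i = s then 1 else 0)) * lam i

lemma negL_perm' (π : Equiv.Perm (Fin 4)) (lam : Fin 4 → ℝ) :
    negL (fun _ : Fin 1 => spinSpinV) (π.permMatrix ℂ) lam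
      = vertexVec (π 0) (π 1) (π 2) (π 3) lam := by
  funext i
  simp only [negL, Jmat_perm', vertexVec, add_mul, Finset.sum_add_distrib, ite_and, ite_mul,
    one_mul, zero_mul]
  by_cases p0 : i = π 0 <;> by_cases p1 : i = π 1 <;> by_cases p2 : i = π 2 <;>
    by_cases p3 : i = π 3 <;>
    simp_all [Finset.sum_ite_eq', ite_and, ite_mul] <;> ring

lemma sum_Iic0' (w : Fin 4 → ℝ) : ∑ i ∈ Finset.Iic (0 : Fin 4), w i = w 0 := by
  rw [show Finset.Iic (0 : Fin 4) = {0} from by decide, Finset.sum_singleton]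
lemma sum_Iic1' (w : Fin 4 → ℝ) : ∑ i ∈ Finset.Iic (1 : Fin 4), w i = w 0 + w 1 := by
  rw [show Finset.Iic (1 : Fin 4) = {0, 1} from by decide, Finset.sum_pair (by decide)]
lemma sum_Iic2' (w : Fin 4 → ℝ) : ∑ i ∈ Finset.Iic (2 : Fin 4), w i = w 0 + w 1 + w 2 := by
  rw [show Finset.Iic (2 : Fin 4) = {0, 1, 2} from by decide,
    Finset.sum_insert (by decide), Finset.sum_pair (by decide)]
  ring
lemma sum_Iic3' (w : Fin 4 → ℝ) : ∑ i ∈ Finset.Iic (3 : Fin 4), w i = w 0 + w 1 + w 2 + w 3 := by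
  rw [show Finset.Iic (3 : Fin 4) = Finset.univ from by decide, Fin.sum_univ_four]

lemma infMaj_iff' (v w : Fin 4 → ℝ) : InfMaj v w ↔
    (w 0 ≤ v 0 ∧ w 0 + w 1 ≤ v 0 + v 1 ∧ w 0 + w 1 + w 2 ≤ v 0 + v 1 + v 2 ∧
      w 0 + w 1 + w 2 + w 3 ≤ v 0 + v 1 + v 2 + v 3) := by
  constructor
  · intro h
    exact ⟨by simpa [sum_Iic0'] using h 0, by simpa [sum_Iic1'] using h 1,
      by simpa [sum_Iic2'] using h 2, by simpa [sum_Iic3'] using h 3⟩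
  · rintro ⟨h0, h1, h2, h3⟩ k
    fin_cases k
    · simpa [sum_Iic0'] using h0
    · simpa [sum_Iic1'] using h1
    · simpa [sum_Iic2'] using h2
    · simpa [sum_Iic3'] using h3

set_option maxHeartbeats 2000000 in
lemma dom_key (a b c d : ℝ) (hd : 0 ≤ d) (hdc : d < c) (hcb : c < b) (hba : b < a)
    (p r q s : Fin 4) (hpr : p ≠ r) (hpq : p ≠ q) (hps : p ≠ s) (hrq : r ≠ q)
    (hrs : r ≠ s) (hqs : q ≠ s) :
    InfMaj ![b, -b, d, -d] (vertexVec p r q s ![a, b, c, d]) ∨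
      InfMaj ![c, d, -c, -d] (vertexVec p r q s ![a, b, c, d]) := by
  fin_cases p <;> fin_cases r <;> fin_cases q <;> fin_cases s <;> simp_all <;>
    first
      | (right; rw [infMaj_iff']; simp +decide [vertexVec]; all_goals (and_intros <;> linarith))
      | (left; rw [infMaj_iff']; simp +decide [vertexVec]; all_goals (and_intros <;> linarith))

/-- The linear functional exposing the optimal face. -/
noncomputable def phi (b c d : ℝ) (w : Fin 4 → ℝ) : ℝ :=
  (b + d + 2) * w 0 + (b - c + 2) * w 1 + 2 * w 2 + w 3

lemma phi_mono (b c d : ℝ) (hd : 0 ≤ d) (hdc : d ≤ c) (hcb : c ≤ b) (v w : Fin 4 → ℝ)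
    (h : InfMaj v w) : phi b c d w ≤ phi b c d v := by
  rw [infMaj_iff'] at h
  obtain ⟨h0, h1, h2, h3⟩ := h
  have e : phi b c d v - phi b c d w
      = (c + d) * (v 0 - w 0) + (b - c) * ((v 0 + v 1) - (w 0 + w 1))
        + ((v 0 + v 1 + v 2) - (w 0 + w 1 + w 2))
        + ((v 0 + v 1 + v 2 + v 3) - (w 0 + w 1 + w 2 + w 3)) := by
    unfold phi; ring
  nlinarith [mul_nonneg (by linarith : (0:ℝ) ≤ c + d) (by linarith : (0:ℝ) ≤ v 0 - w 0),
    mul_nonneg (by linarith : (0:ℝ) ≤ b - c) (by linarith : (0:ℝ) ≤ (v 0 + v 1) - (w 0 + w 1))]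

lemma phi_seg (b c d : ℝ) (v : Fin 4 → ℝ)
    (hv : v ∈ segment ℝ ![b, -b, d, -d] ![c, d, -c, -d]) :
    phi b c d v = b * c + b * d + d := by
  obtain ⟨t1, t2, ht1, ht2, hts, rfl⟩ := hv
  simp only [phi, Pi.add_apply, Pi.smul_apply, smul_eq_mul,
    Matrix.cons_val_zero, Matrix.cons_val_one, Matrix.head_cons,
    Matrix.cons_val_two, Matrix.tail_cons, Matrix.cons_val_three]
  linear_combination (b * c + b * d + d) * hts

/-! ### The main theorem -/

set_option maxHeartbeats 1000000 in
/-- For the spin-spin system and a strictly ordered state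
`λ = (a,b,c,d)`, an element of the permutation polytope `P(λ)` is optimal iff it is a
convex combination of `(b, −b, d, −d)` and `(c, d, −c, −d)`. -/
theorem spin_spin_optimal_derivatives (a b c d : ℝ)
    (hd : 0 ≤ d) (hdc : d < c) (hcb : c < b) (hba : b < a) (hsum : a + b + c + d = 1)
    (P : Set (Fin 4 → ℝ))
    (hP : P = convexHull ℝ {w : Fin 4 → ℝ | ∃ π : Equiv.Perm (Fin 4),
      w = negL (fun _ : Fin 1 => spinSpinV) (π.permMatrix ℂ) ![a, b, c, d]}) :
    ∀ v ∈ P, ((∀ w ∈ P, InfMaj w v → w = v) ↔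
      v ∈ segment ℝ ![b, -b, d, -d] ![c, d, -c, -d]) := by
  set u1 : Fin 4 → ℝ := ![b, -b, d, -d] with hu1def
  set u2 : Fin 4 → ℝ := ![c, d, -c, -d] with hu2def
  set S : Set (Fin 4 → ℝ) := {w : Fin 4 → ℝ | ∃ π : Equiv.Perm (Fin 4),
      w = negL (fun _ : Fin 1 => spinSpinV) (π.permMatrix ℂ) ![a, b, c, d]} with hSdef
  -- u1 and u2 are in S
  have hu1S : u1 ∈ S := by
    refine ⟨Equiv.swap 1 2, ?_⟩
    rw [negL_perm']
    funext i
    have e0 : (Equiv.swap (1:Fin 4) 2) 0 = 0 := by decide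
    have e1 : (Equiv.swap (1:Fin 4) 2) 1 = 2 := by decide
    have e2 : (Equiv.swap (1:Fin 4) 2) 2 = 1 := by decide
    have e3 : (Equiv.swap (1:Fin 4) 2) 3 = 3 := by decide
    rw [e0, e1, e2, e3]
    fin_cases i <;> simp +decide [vertexVec, hu1def]
  have hu2S : u2 ∈ S := by
    refine ⟨1, ?_⟩
    rw [negL_perm']
    funext i
    have e0 : (1 : Equiv.Perm (Fin 4)) 0 = 0 := rfl
    have e1 : (1 : Equiv.Perm (Fin 4)) 1 = 1 := rfl
    have e2 : (1 : Equiv.Perm (Fin 4)) 2 = 2 := rfl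
    have e3 : (1 : Equiv.Perm (Fin 4)) 3 = 3 := rfl
    rw [e0, e1, e2, e3]
    fin_cases i <;> simp +decide [vertexVec, hu2def]
  -- the segment is inside P
  have hsegP : segment ℝ u1 u2 ⊆ P := by
    rw [hP]
    exact (convex_convexHull ℝ S).segment_subset (subset_convexHull ℝ S hu1S)
      (subset_convexHull ℝ S hu2S)
  -- every element of P is dominated by a segment point
  have hPD : ∀ w ∈ P, ∃ s ∈ segment ℝ u1 u2, InfMaj s w := by
    have hDconv : Convex ℝ {w : Fin 4 → ℝ | ∃ s ∈ segment ℝ u1 u2, InfMaj s w} := by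
      rintro x ⟨sx, hsx, hmx⟩ y ⟨sy, hsy, hmy⟩ t1 t2 ht1 ht2 hts
      refine ⟨t1 • sx + t2 • sy, (convex_segment u1 u2) hsx hsy ht1 ht2 hts, ?_⟩
      intro k
      have hx := hmx k
      have hy := hmy k
      simp only [Pi.add_apply, Pi.smul_apply, smul_eq_mul, Finset.sum_add_distrib,
        ← Finset.mul_sum]
      have := mul_le_mul_of_nonneg_left hx ht1
      have := mul_le_mul_of_nonneg_left hy ht2
      linarith
    have hSD : S ⊆ {w : Fin 4 → ℝ | ∃ s ∈ segment ℝ u1 u2, InfMaj s w} := by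
      rintro w ⟨π, rfl⟩
      rw [negL_perm']
      have hinj : ∀ i j : Fin 4, i ≠ j → π i ≠ π j := fun i j hij h => hij (π.injective h)
      rcases dom_key a b c d hd hdc hcb hba (π 0) (π 1) (π 2) (π 3)
        (hinj 0 1 (by decide)) (hinj 0 2 (by decide)) (hinj 0 3 (by decide))
        (hinj 1 2 (by decide)) (hinj 1 3 (by decide)) (hinj 2 3 (by decide)) with h | h
      · exact ⟨u1, left_mem_segment ℝ u1 u2, h⟩
      · exact ⟨u2, right_mem_segment ℝ u1 u2, h⟩
    intro w hw
    have : P ⊆ {w : Fin 4 → ℝ | ∃ s ∈ segment ℝ u1 u2, InfMaj s w} := by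
      rw [hP]; exact convexHull_min hSD hDconv
    exact this hw
  -- main argument
  intro v hv
  constructor
  · intro hopt
    obtain ⟨s, hs, hmaj⟩ := hPD v hv
    have := hopt s (hsegP hs) hmaj
    rwa [← this]
  · intro hseg w hw hmaj
    obtain ⟨s, hs, hmajs⟩ := hPD w hw
    have hφv : phi b c d v = b * c + b * d + d := phi_seg b c d v hseg
    have hφs : phi b c d s = b * c + b * d + d := phi_seg b c d s hs
    have h1 : phi b c d w ≤ phi b c d s :=
      phi_mono b c d hd hdc.le hcb.le s w hmajs
    have h2 : phi b c d v ≤ phi b c d w :=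
      phi_mono b c d hd hdc.le hcb.le w v hmaj
    have hφw : phi b c d w = phi b c d v := by linarith
    rw [infMaj_iff'] at hmaj
    obtain ⟨m0, m1, m2, m3⟩ := hmaj
    have e : (c + d) * (w 0 - v 0) + (b - c) * ((w 0 + w 1) - (v 0 + v 1))
        + ((w 0 + w 1 + w 2) - (v 0 + v 1 + v 2))
        + ((w 0 + w 1 + w 2 + w 3) - (v 0 + v 1 + v 2 + v 3)) = 0 := by
      have := hφw
      unfold phi at this
      linarith [this]
    have hA : w 0 - v 0 ≥ 0 := by linarith
    have hB : (w 0 + w 1) - (v 0 + v 1) ≥ 0 := by linarith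
    have hC : (w 0 + w 1 + w 2) - (v 0 + v 1 + v 2) ≥ 0 := by linarith
    have hD : (w 0 + w 1 + w 2 + w 3) - (v 0 + v 1 + v 2 + v 3) ≥ 0 := by linarith
    have hcd : (0:ℝ) < c + d := by linarith
    have hbc : (0:ℝ) < b - c := by linarith
    have hA0 : w 0 - v 0 = 0 := by
      nlinarith [mul_nonneg hbc.le hB]
    have hB0 : (w 0 + w 1) - (v 0 + v 1) = 0 := by
      nlinarith [mul_nonneg hcd.le hA]
    have hC0 : (w 0 + w 1 + w 2) - (v 0 + v 1 + v 2) = 0 := by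
      nlinarith [mul_nonneg hcd.le hA, mul_nonneg hbc.le hB]
    have hD0 : (w 0 + w 1 + w 2 + w 3) - (v 0 + v 1 + v 2 + v 3) = 0 := by
      nlinarith [mul_nonneg hcd.le hA, mul_nonneg hbc.le hB]
    have g0 : w 0 = v 0 := by linarith
    have g1 : w 1 = v 1 := by linarith
    have g2 : w 2 = v 2 := by linarith
    have g3 : w 3 = v 3 := by linarith
    funext i
    fin_cases i
    · exact g0
    · exact g1
    · exact g2
    · exact g3
end

section
/- Let 0 < γ1 < γ2, let b0, c0 > 0 and let 0 < ε < b0 + c0. Define t1* := (γ2·ln(2b0/ε) − γ1·ln(2c0/ε))/(γ2² − γ1²) and t2* := (γ1·ln(2b0/ε) − γ2·ln(2c0/ε))/(γ1² − γ2²). Then (t1*, t2*) satisfies the constraint e^{−(γ2·t1* + γ1·t2*)}·b0 + e^{−(γ1·t1* + γ2·t2*)}·c0 = ε, with e^{−(γ2·t1* + γ1·t2*)}·b0 = e^{−(γ1·t1* + γ2·t2*)}·c0 = ε/2, and for every (t1, t2) ∈ ℝ² satisfying e^{−(γ2·t1 + γ1·t2)}·b0 + e^{−(γ1·t1 + γ2·t2)}·c0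 = ε one has t1 + t2 ≥ t1* + t2*, with equality if and only if (t1, t2) = (t1*, t2*). -/
set_option maxHeartbeats 1000000 in
/-- The explicit times `(t₁*, t₂*)` satisfy the cooling constraint with
both exponential terms equal to `ε/2`, and they uniquely minimize the total time `t₁ + t₂`
among all real pairs satisfying the constraint. -/
theorem optimal_cooling_times (γ1 γ2 b0 c0 ε : ℝ)
    (hγ1 : 0 < γ1) (hγ12 : γ1 < γ2) (hb0 : 0 < b0) (hc0 : 0 < c0)
    (hε : 0 < ε) (hεlt : ε < b0 + c0)
    (t1s t2s : ℝ)
    (ht1s : t1s = (γ2 * Real.log (2 * b0 / ε) - γ1 * Real.log (2 * c0 / ε))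
      / (γ2 ^ 2 - γ1 ^ 2))
    (ht2s : t2s = (γ1 * Real.log (2 * b0 / ε) - γ2 * Real.log (2 * c0 / ε))
      / (γ1 ^ 2 - γ2 ^ 2)) :
    Real.exp (-(γ2 * t1s + γ1 * t2s)) * b0 = ε / 2 ∧
    Real.exp (-(γ1 * t1s + γ2 * t2s)) * c0 = ε / 2 ∧
    Real.exp (-(γ2 * t1s + γ1 * t2s)) * b0 + Real.exp (-(γ1 * t1s + γ2 * t2s)) * c0 = ε ∧
    ∀ t1 t2 : ℝ,
      Real.exp (-(γ2 * t1 + γ1 * t2)) * b0 + Real.exp (-(γ1 * t1 + γ2 * t2)) * c0 = ε →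
      t1s + t2s ≤ t1 + t2 ∧ (t1 + t2 = t1s + t2s ↔ t1 = t1s ∧ t2 = t2s) := by
  have hne : γ2 ^ 2 - γ1 ^ 2 ≠ 0 := by nlinarith
  have hne' : γ1 ^ 2 - γ2 ^ 2 ≠ 0 := by nlinarith
  have hbpos : 0 < 2 * b0 / ε := by positivity
  have hcpos : 0 < 2 * c0 / ε := by positivity
  have hu : γ2 * t1s + γ1 * t2s = Real.log (2 * b0 / ε) := by
    rw [ht1s, ht2s]; field_simp; ring
  have hv : γ1 * t1s + γ2 * t2s = Real.log (2 * c0 / ε) := by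
    rw [ht1s, ht2s]; field_simp; ring
  have h1 : Real.exp (-(γ2 * t1s + γ1 * t2s)) * b0 = ε / 2 := by
    rw [hu, Real.exp_neg, Real.exp_log hbpos]; field_simp
  have h2 : Real.exp (-(γ1 * t1s + γ2 * t2s)) * c0 = ε / 2 := by
    rw [hv, Real.exp_neg, Real.exp_log hcpos]; field_simp
  refine ⟨h1, h2, by linarith, ?_⟩
  intro t1 t2 h
  set x := Real.exp (-(γ2 * t1 + γ1 * t2)) * b0 with hxdef
  set y := Real.exp (-(γ1 * t1 + γ2 * t2)) * c0 with hydef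
  have hx : 0 < x := mul_pos (Real.exp_pos _) hb0
  have hy : 0 < y := mul_pos (Real.exp_pos _) hc0
  have hx' : x + y = ε := h
  have hxy : x * y = b0 * c0 * Real.exp (-((γ1 + γ2) * (t1 + t2))) := by
    rw [hxdef, hydef, show -((γ1 + γ2) * (t1 + t2)) =
      -(γ2 * t1 + γ1 * t2) + -(γ1 * t1 + γ2 * t2) by ring, Real.exp_add]; ring
  have hsxy : (ε / 2) * (ε / 2) = b0 * c0 * Real.exp (-((γ1 + γ2) * (t1s + t2s))) := by
    rw [show -((γ1 + γ2) * (t1s + t2s)) =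
      -(γ2 * t1s + γ1 * t2s) + -(γ1 * t1s + γ2 * t2s) by ring, Real.exp_add]
    linear_combination (-(Real.exp (-(γ2 * t1s + γ1 * t2s)) * b0)) * h2 + (-(ε / 2)) * h1
  have hamgm : x * y ≤ (ε / 2) * (ε / 2) := by nlinarith [sq_nonneg (x - y)]
  have hbc : 0 < b0 * c0 := mul_pos hb0 hc0
  have hexple : Real.exp (-((γ1 + γ2) * (t1 + t2))) ≤
      Real.exp (-((γ1 + γ2) * (t1s + t2s))) := by
    rw [hxy, hsxy] at hamgm
    exact le_of_mul_le_mul_left hamgm hbc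
  have hpos : 0 < γ1 + γ2 := by linarith
  have hle : t1s + t2s ≤ t1 + t2 := by
    have h' := Real.exp_le_exp.mp hexple
    have h'' : (γ1 + γ2) * (t1s + t2s) ≤ (γ1 + γ2) * (t1 + t2) := by linarith
    exact le_of_mul_le_mul_left h'' hpos
  refine ⟨hle, ?_, ?_⟩
  · intro heq
    have hxyeq : x * y = (ε / 2) * (ε / 2) := by rw [hxy, hsxy, heq]
    have hx2 : x = ε / 2 := by nlinarith [sq_nonneg (x - y)]
    have hy2 : y = ε / 2 := by linarith
    have e1 : γ2 * t1 + γ1 * t2 = γ2 * t1s + γ1 * t2s := by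
      have h' : Real.exp (-(γ2 * t1 + γ1 * t2)) * b0
          = Real.exp (-(γ2 * t1s + γ1 * t2s)) * b0 := by rw [h1]; exact hx2
      have h'' := Real.exp_injective (mul_right_cancel₀ (ne_of_gt hb0) h')
      linarith
    have e2 : γ1 * t1 + γ2 * t2 = γ1 * t1s + γ2 * t2s := by
      have h' : Real.exp (-(γ1 * t1 + γ2 * t2)) * c0
          = Real.exp (-(γ1 * t1s + γ2 * t2s)) * c0 := by rw [h2]; exact hy2
      have h'' := Real.exp_injective (mul_right_cancel₀ (ne_of_gt hc0) h')
      linarith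
    have ht1 : t1 = t1s := by
      have hz : (γ2 ^ 2 - γ1 ^ 2) * (t1 - t1s) = 0 := by linear_combination γ2 * e1 - γ1 * e2
      rcases mul_eq_zero.mp hz with h' | h'
      · exact absurd h' hne
      · linarith
    have ht2 : t2 = t2s := by
      have hz : (γ2 ^ 2 - γ1 ^ 2) * (t2 - t2s) = 0 := by linear_combination γ2 * e2 - γ1 * e1
      rcases mul_eq_zero.mp hz with h' | h'
      · exact absurd h' hne
      · linarith
    exact ⟨ht1, ht2⟩
  · rintro ⟨rfl, rfl⟩; ring
end
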